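/- arXiv:2103.15204 — 7 statements merged into one kernel-verified Lean document; each statement's English description precedes it below -/
import Mathlib

section
/- Let q > 0 and suppose T > 0 satisfies T = ((1+q)^2/(2q)) · (coth(T) + sqrt(coth(T)^2 − 4q/(1+q)^2)). Then ((1+q)^2/q) · coth(T) − T = 2 / (coth(T) + sqrt(coth(T)^2 − 4q/(1+q)^2)) < 2, and consequently T > q + 1/q. -/
theorem Tq_identity_and_lower_bound (q T : ℝ) (hq : 0 < q) (hT : 0 < T)
    (heq : T = ((1 + q) ^ 2 / (2 * q)) *
      (Real.cosh T / Real.sinh T +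
        Real.sqrt ((Real.cosh T / Real.sinh T) ^ 2 - 4 * q / (1 + q) ^ 2))) :
    ((1 + q) ^ 2 / q) * (Real.cosh T / Real.sinh T) - T =
      2 / (Real.cosh T / Real.sinh T +
        Real.sqrt ((Real.cosh T / Real.sinh T) ^ 2 - 4 * q / (1 + q) ^ 2)) ∧
    2 / (Real.cosh T / Real.sinh T +
        Real.sqrt ((Real.cosh T / Real.sinh T) ^ 2 - 4 * q / (1 + q) ^ 2)) < 2 ∧
    q + 1 / q < T := by
  have hsinh : 0 < Real.sinh T := by positivity
  set c : ℝ := Real.cosh T / Real.sinh T with hcdef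
  have hc1 : 1 < c := (one_lt_div hsinh).mpr (Real.sinh_lt_cosh T)
  have hqle : 4 * q / (1 + q) ^ 2 ≤ 1 := by
    rw [div_le_one (by positivity)]; nlinarith [sq_nonneg (1 - q)]
  have hrad : 0 ≤ c ^ 2 - 4 * q / (1 + q) ^ 2 := by nlinarith
  set s : ℝ := Real.sqrt (c ^ 2 - 4 * q / (1 + q) ^ 2) with hsdef
  have hs0 : 0 ≤ s := Real.sqrt_nonneg _
  have hs2 : s ^ 2 = c ^ 2 - 4 * q / (1 + q) ^ 2 := Real.sq_sqrt hrad
  have hcs : 1 < c + s := by linarith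
  have hcs0 : 0 < c + s := by linarith
  have h1q : (0:ℝ) < (1 + q) ^ 2 := by positivity
  have key : ((1 + q) ^ 2 / q) * c - T = 2 / (c + s) := by
    have hs2' : (c ^ 2 - s ^ 2) * (1 + q) ^ 2 = 4 * q := by
      rw [hs2]; field_simp; ring
    rw [heq, eq_div_iff hcs0.ne']
    field_simp
    nlinarith [hs2', sq_nonneg (c + s)]
  refine ⟨key, ?_, ?_⟩
  · rw [div_lt_iff₀ hcs0]; linarith
  · have h2 : 2 / (c + s) < 2 := by rw [div_lt_iff₀ hcs0]; linarith
    have : ((1 + q) ^ 2 / q) * c - T < 2 := key ▸ h2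
    have hc' : (1 + q) ^ 2 / q ≤ ((1 + q) ^ 2 / q) * c := by
      nlinarith [div_pos h1q hq]
    have hq' : q + 1 / q = (1 + q) ^ 2 / q - 2 := by field_simp; ring
    linarith
end

section
/- Let q > 0 and suppose T > 0 satisfies T = ((1+q)^2/(2q)) · (coth(T) + sqrt(coth(T)^2 − 4q/(1+q)^2)). Then coth(T) + sqrt(coth(T)^2 − 4q/(1+q)^2) < 2, equivalently T < (1+q)^2/q. -/
private lemma coth_bound (A T : ℝ) (hA : 2 ≤ A) (hAT : A < T) :
    Real.cosh T / Real.sinh T < 1 + 1 / (2 * A) := by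
  have hT0 : 0 < T := by linarith
  have hs : 0 < Real.sinh T := Real.sinh_pos_iff.2 hT0
  have hE : 0 < Real.exp T := Real.exp_pos T
  have he1 : 1 + A ≤ Real.exp A := by linarith [Real.add_one_le_exp A]
  have he2 : Real.exp A < Real.exp T := Real.exp_lt_exp.2 hAT
  have hX : 4 * A + 1 < (Real.exp T) ^ 2 := by nlinarith
  rw [div_lt_iff₀ hs, Real.cosh_eq, Real.sinh_eq, Real.exp_neg]
  have hA0 : (0:ℝ) < A := by linarith
  set E := Real.exp T with hEdef
  have hI : 0 < E⁻¹ := inv_pos.2 hE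
  have hEI : E * E⁻¹ = 1 := mul_inv_cancel₀ (ne_of_gt hE)
  have hIE2 : E⁻¹ * E ^ 2 = E := by field_simp
  have hB : (0:ℝ) < 1 / (2 * A) := by positivity
  have hAB : 1 / (2 * A) * (2 * A) = 1 := by field_simp
  have h1 : 0 < 1 / (2 * A) * (E ^ 2 - 1) - 2 := by
    nlinarith [mul_pos hB (show 0 < E ^ 2 - 1 - 4 * A by linarith)]
  have h2 : 0 < E⁻¹ * (1 / (2 * A) * (E ^ 2 - 1) - 2) := mul_pos hI h1
  nlinarith [h2, hEI, hIE2]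

theorem Tq_upper_bound (q T : ℝ) (hq : 0 < q) (hT : 0 < T)
    (heq : T = ((1 + q) ^ 2 / (2 * q)) *
      (Real.cosh T / Real.sinh T +
        Real.sqrt ((Real.cosh T / Real.sinh T) ^ 2 - 4 * q / (1 + q) ^ 2))) :
    (Real.cosh T / Real.sinh T +
        Real.sqrt ((Real.cosh T / Real.sinh T) ^ 2 - 4 * q / (1 + q) ^ 2)) < 2 ∧
    T < (1 + q) ^ 2 / q := by
  set c := Real.cosh T / Real.sinh T with hc
  set a := 4 * q / (1 + q) ^ 2 with ha
  set s := Real.sqrt (c ^ 2 - a) with hsdef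
  set A := (1 + q) ^ 2 / (2 * q) with hAdef
  have hq1 : (0:ℝ) < (1 + q) ^ 2 := by positivity
  have hA0 : 0 < A := by positivity
  have hA2 : 2 ≤ A := by
    rw [hAdef, le_div_iff₀ (by linarith)]
    nlinarith [sq_nonneg (1 - q)]
  have hsh : 0 < Real.sinh T := Real.sinh_pos_iff.2 hT
  have hc1 : 1 < c := by
    rw [hc, lt_div_iff₀ hsh, one_mul]
    exact Real.sinh_lt_cosh T
  have hs0 : 0 ≤ s := Real.sqrt_nonneg _
  have hTA : A < T := by
    calc A = A * 1 := (mul_one A).symm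
    _ < A * (c + s) := by apply mul_lt_mul_of_pos_left (by linarith) hA0
    _ = T := heq.symm
  have hcb : c < 1 + 1 / (2 * A) := coth_bound A T hA2 hTA
  have h14 : 1 / (2 * A) = a / 4 := by
    rw [hAdef, ha]; field_simp
  rw [h14] at hcb
  have ha0 : 0 < a := by positivity
  have ha1 : a ≤ 1 := by
    rw [ha, div_le_one hq1]; nlinarith [sq_nonneg (1 - q)]
  have h2c : 0 < 2 - c := by nlinarith
  have hlt : s < 2 - c := by
    rw [hsdef]
    rw [Real.sqrt_lt' h2c]
    nlinarith
  constructor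
  · linarith
  · have : (1 + q) ^ 2 / q = A * 2 := by rw [hAdef]; field_simp
    rw [this, heq]
    exact mul_lt_mul_of_pos_left (by linarith) hA0
end

section
/- For q > 0, let T_q be the unique positive solution of T = ((1+q)^2/(2q)) · (coth(T) + sqrt(coth(T)^2 − 4q/(1+q)^2)). Define F(q) = 2π(1+q)²/(q·T_q). Then 2π < F(q) < 2π + 4πq/(q²+1). -/
open Real

lemma sinh_lt_mul_cosh_aux {x : ℝ} (hx : 0 < x) : Real.sinh x < x * Real.cosh x := by
  have key : StrictMonoOn (fun y : ℝ => y * Real.cosh y - Real.sinh y) (Set.Ici 0) := by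
    apply strictMonoOn_of_deriv_pos (convex_Ici 0)
    · fun_prop
    · intro y hy
      rw [interior_Ici, Set.mem_Ioi] at hy
      have h : HasDerivAt (fun y : ℝ => y * Real.cosh y - Real.sinh y)
          (1 * Real.cosh y + y * Real.sinh y - Real.cosh y) y :=
        ((hasDerivAt_id y).mul (Real.hasDerivAt_cosh y)).sub (Real.hasDerivAt_sinh y)
      rw [h.deriv]
      have := Real.sinh_pos_iff.2 hy
      nlinarith
  have h0 := key (Set.self_mem_Ici) (Set.mem_Ici.2 hx.le) hx
  simpa using h0

set_option maxHeartbeats 1000000 in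
theorem normalized_eigenvalue_bounds (q T : ℝ) (hq : 0 < q) (hT : 0 < T)
    (heq : T = ((1 + q) ^ 2 / (2 * q)) *
      (Real.cosh T / Real.sinh T +
        Real.sqrt ((Real.cosh T / Real.sinh T) ^ 2 - 4 * q / (1 + q) ^ 2))) :
    2 * π < 2 * π * (1 + q) ^ 2 / (q * T) ∧
    2 * π * (1 + q) ^ 2 / (q * T) < 2 * π + 4 * π * q / (q ^ 2 + 1) := by
  have h1q : (0:ℝ) < 1 + q := by linarith
  have hP : (0:ℝ) < (1 + q)^2 := by positivity
  have hv : 0 < Real.sinh T := Real.sinh_pos_iff.2 hT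
  have hu : 0 < Real.cosh T := Real.cosh_pos T
  have hvu : Real.sinh T < Real.cosh T := by
    have h1 := Real.cosh_sub_sinh T
    have h2 := Real.exp_pos (-T)
    linarith
  set u := Real.cosh T with hudef
  set v := Real.sinh T with hvdef
  have hv' : v ≠ 0 := ne_of_gt hv
  have hP' : ((1+q)^2 : ℝ) ≠ 0 := ne_of_gt hP
  have hq' : q ≠ 0 := ne_of_gt hq
  have h4q : 4 * q ≤ (1 + q)^2 := by nlinarith [sq_nonneg (1 - q)]
  -- the key identity: (1+q)^2 * T * u = (q T^2 + (1+q)^2) v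
  have hI : (1 + q)^2 * (T * u) = (q * T^2 + (1 + q)^2) * v := by
    have hR1 : 1 < u / v := (one_lt_div hv).2 hvu
    have hD : 0 ≤ (u / v)^2 - 4 * q / (1 + q)^2 := by
      have h1 : 1 < (u/v)^2 := by nlinarith
      have h2 : 4 * q / (1+q)^2 ≤ 1 := by rw [div_le_one hP]; linarith
      linarith
    set S := Real.sqrt ((u / v) ^ 2 - 4 * q / (1 + q) ^ 2) with hSdef
    have hS2 : S^2 = (u/v)^2 - 4*q/(1+q)^2 := Real.sq_sqrt hD
    have hSum : (1+q)^2 * (u/v + S) = 2*q*T := by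
      rw [heq]; field_simp
    have hS' : (1+q)^2 * v * S = 2*q*T*v - (1+q)^2*u := by
      field_simp at hSum
      linarith only [hSum]
    have hBig : (1+q)^2 * ((1+q)^2 * u^2 - 4*q*v^2) = (2*q*T*v - (1+q)^2*u)^2 := by
      have e1 : ((1+q)^2 * v)^2 * S^2 = (2*q*T*v - (1+q)^2*u)^2 := by
        rw [← hS']; ring
      rw [hS2] at e1
      rw [← e1]
      field_simp
    have h0 : 4 * q * (v * ((q * T^2 + (1 + q)^2) * v - (1 + q)^2 * (T * u))) = 0 := by
      linear_combination - hBig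
    have h1 : v * ((q * T^2 + (1 + q)^2) * v - (1 + q)^2 * (T * u)) = 0 := by
      have h4q0 : (4 * q : ℝ) ≠ 0 := by positivity
      exact (mul_eq_zero.mp h0).resolve_left h4q0
    have h2 : (q * T^2 + (1 + q)^2) * v - (1 + q)^2 * (T * u) = 0 :=
      (mul_eq_zero.mp h1).resolve_left hv'
    linarith only [h2]
  clear heq
  -- exponential representations
  have heT := Real.exp_pos T
  have heT' := Real.exp_pos (-T)
  have hue : u = (Real.exp T + Real.exp (-T)) / 2 := Real.cosh_eq T
  have hve : v = (Real.exp T - Real.exp (-T)) / 2 := Real.sinh_eq T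
  -- upper bound: q * T < (1+q)^2
  have hkey : (2*T + 1) * Real.exp (-T) < Real.exp T := by
    have h2T : 2 * T + 1 < Real.exp (2 * T) := by
      have := Real.add_one_lt_exp (x := 2*T) (by positivity)
      linarith
    have hee : Real.exp (2*T) * Real.exp (-T) = Real.exp T := by
      rw [← Real.exp_add]; ring_nf
    calc (2*T + 1) * Real.exp (-T) < Real.exp (2*T) * Real.exp (-T) :=
          mul_lt_mul_of_pos_right h2T heT'
      _ = Real.exp T := hee
  have hTuv : T * u < (T + 1) * v := by
    rw [hue, hve]; linarith only [hkey]
  have hupper : q * T < (1 + q)^2 := by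
    have h1 : (q*T^2 + (1+q)^2) * v < (1+q)^2 * ((T+1) * v) := by
      rw [← hI]; exact (mul_lt_mul_iff_right₀ hP).2 hTuv
    have h2 : q * T * (T * v) < (1+q)^2 * (T * v) := by nlinarith only [h1]
    exact lt_of_mul_lt_mul_right h2 (le_of_lt (mul_pos hT hv))
  -- lower bound: q^2 + 1 < q * T
  have hf := Real.exp_pos (T/2)
  have hg := Real.exp_pos (-(T/2))
  have hff : Real.exp (T/2) * Real.exp (T/2) = Real.exp T := by
    rw [← Real.exp_add]; ring_nf
  have hgg : Real.exp (-(T/2)) * Real.exp (-(T/2)) = Real.exp (-T) := by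
    rw [← Real.exp_add]; ring_nf
  have hhalf := sinh_lt_mul_cosh_aux (x := T/2) (by linarith : (0:ℝ) < T/2)
  rw [Real.sinh_eq, Real.cosh_eq] at hhalf
  have hfg : Real.exp (T/2) * (2 - T) < Real.exp (-(T/2)) * (2 + T) := by
    linarith only [hhalf]
  have hT2 : 2 < T := by
    by_contra hle
    push_neg at hle
    have h1 : (1+q)^2 * (4 * (T * u)) ≤ (1+q)^2 * ((T^2 + 4) * v) := by
      nlinarith only [hI, mul_pos (mul_pos hT hT) hv, h4q, hP]
    have h2 : 4 * (T * u) ≤ (T^2 + 4) * v := le_of_mul_le_mul_left h1 hP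
    have hnn : 0 ≤ Real.exp (T/2) * (2 - T) := by
      apply mul_nonneg (le_of_lt hf); linarith
    have hsqd : (Real.exp (T/2) * (2 - T)) * (Real.exp (T/2) * (2 - T)) <
        (Real.exp (-(T/2)) * (2 + T)) * (Real.exp (-(T/2)) * (2 + T)) :=
      mul_self_lt_mul_self hnn hfg
    have h3 : (T^2 + 4) * v < 4 * (T * u) := by
      rw [hue, hve, ← hff, ← hgg]
      nlinarith only [hsqd]
    linarith only [h2, h3]
  have hlower : q^2 + 1 < q * T := by
    have h1 : (T^2 + T + 2) * v < (T^2 + 2*T) * u := by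
      rw [hue, hve]
      nlinarith only [mul_pos (show (0:ℝ) < T - 2 by linarith) heT,
        mul_pos (show (0:ℝ) < 2*T^2 + 3*T + 2 by positivity) heT']
    have h3 : T^2 * v < (T + 2) * (T * u - v) := by nlinarith only [h1]
    have h2 : (1+q)^2 * (T^2 * v) < q * (T + 2) * (T^2 * v) := by
      have hq1 : q * T^2 * v = (1+q)^2 * (T * u - v) := by nlinarith only [hI]
      have hrw : q * (T+2) * (T^2 * v) = (1+q)^2 * ((T+2) * (T * u - v)) := by
        linear_combination (T + 2) * hq1
      rw [hrw]
      exact (mul_lt_mul_iff_right₀ hP).2 h3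
    have hT2v : 0 < T^2 * v := by positivity
    have h4 : (1+q)^2 < q * (T + 2) := lt_of_mul_lt_mul_right h2 (le_of_lt hT2v)
    nlinarith only [h4, hq]
  -- conclude
  have hqT : 0 < q * T := mul_pos hq hT
  have hπ := Real.pi_pos
  constructor
  · rw [lt_div_iff₀ hqT]
    nlinarith only [hupper, hπ, hqT]
  · have hrw : 2 * π + 4 * π * q / (q ^ 2 + 1) = 2 * π * (1 + q)^2 / (q^2 + 1) := by
      have h0 : (q^2 + 1 : ℝ) ≠ 0 := by positivity
      field_simp
      ring
    rw [hrw]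
    exact div_lt_div_of_pos_left (by positivity) (by positivity) hlower
end

section
/- For q > 0, let T_q be the unique positive solution of T = ((1+q)^2/(2q)) · (coth(T) + sqrt(coth(T)^2 − 4q/(1+q)^2)), and let F(q) = 2π(1+q)²/(q·T_q). Then F(q) → 2π as q → ∞ and as q → 0⁺. -/
open Real Filter

set_option maxHeartbeats 1000000 in
theorem normalized_eigenvalue_limits (T : ℝ → ℝ)
    (hT : ∀ q : ℝ, 0 < q → 0 < T q ∧
      T q = ((1 + q) ^ 2 / (2 * q)) *
        (Real.cosh (T q) / Real.sinh (T q) +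
          Real.sqrt ((Real.cosh (T q) / Real.sinh (T q)) ^ 2 - 4 * q / (1 + q) ^ 2))) :
    Tendsto (fun q => 2 * π * (1 + q) ^ 2 / (q * T q)) atTop (nhds (2 * π)) ∧
    Tendsto (fun q => 2 * π * (1 + q) ^ 2 / (q * T q))
      (nhdsWithin 0 (Set.Ioi 0)) (nhds (2 * π)) := by
  -- Key bounds on q * T q
  have key : ∀ q : ℝ, 0 < q →
      q * T q ≤ (1 + q) ^ 2 ∧
      (q ≤ 1 → 1 + q ≤ q * T q) ∧
      (1 ≤ q → q * (1 + q) ≤ q * T q) := by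
    intro q hq
    obtain ⟨ht0, hteq⟩ := hT q hq
    set t := T q with htdef
    set c := Real.cosh t / Real.sinh t with hcdef
    set s := Real.sqrt (c ^ 2 - 4 * q / (1 + q) ^ 2) with hsdef
    have hs : 0 < Real.sinh t := Real.sinh_pos_iff.mpr ht0
    have hc1 : 1 < c := by
      rw [hcdef, lt_div_iff₀ hs]
      nlinarith [Real.cosh_sub_sinh t, Real.exp_pos (-t)]
    have h1q : (0:ℝ) < 1 + q := by linarith
    have h1q2 : (0:ℝ) < (1 + q) ^ 2 := by positivity
    have hs0 : 0 ≤ s := Real.sqrt_nonneg _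
    -- q * t in polynomial-friendly form
    have hqt : q * t = (1 + q) ^ 2 / 2 * (c + s) := by
      rw [hteq]; field_simp
    -- lower crude bound: (1+q)^2 < 2*q*t
    have htM : (1 + q) ^ 2 < 2 * q * t := by
      have h1 : (1 + q) ^ 2 / (2 * q) < t := by
        rw [hteq]
        nlinarith [mul_pos (show (0:ℝ) < (1+q)^2/(2*q) by positivity)
          (show (0:ℝ) < c - 1 + s by linarith)]
      rw [div_lt_iff₀ (by positivity)] at h1
      linarith
    have ht2 : 2 < t := by nlinarith [sq_nonneg (1 - q), hq]
    -- exp growth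
    have hexp : 1 + 2 * t + t ^ 2 ≤ Real.exp (2 * t) := by
      have h := Real.add_one_le_exp t
      have hE : Real.exp (2 * t) = Real.exp t * Real.exp t := by
        rw [← Real.exp_add]; ring_nf
      nlinarith [Real.exp_pos t, ht0]
    have key2 : q + 2 * (1 + q) ^ 2 ≤ q * Real.exp (2 * t) := by
      nlinarith [mul_le_mul_of_nonneg_left hexp hq.le,
        mul_nonneg (sub_nonneg.mpr htM.le) ht0.le,
        mul_nonneg h1q2.le (sub_nonneg.mpr ht2.le)]
    have hEinv : Real.exp (-t) * Real.exp t = 1 := by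
      rw [← Real.exp_add]; simp
    have hE2 : Real.exp (2 * t) = Real.exp t * Real.exp t := by
      rw [← Real.exp_add]; ring_nf
    have h3 : 2 * (1 + q) ^ 2 * Real.exp (-t) ≤ q * (Real.exp t - Real.exp (-t)) := by
      have h := mul_le_mul_of_nonneg_left key2 (Real.exp_pos (-t)).le
      rw [hE2] at h
      have heEE : Real.exp (-t) * (Real.exp t * Real.exp t) = Real.exp t := by
        rw [← mul_assoc, hEinv, one_mul]
      nlinarith [h, heEE]
    -- upper bound on c
    have hcup2 : c * (1 + q) ^ 2 ≤ (1 + q) ^ 2 + q := by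
      rw [hcdef, div_mul_eq_mul_div, div_le_iff₀ hs, Real.cosh_eq, Real.sinh_eq]
      nlinarith [h3]
    have hc54 : c ≤ 5 / 4 := by
      nlinarith [hcup2, sq_nonneg (1 - q), h1q2]
    have ha1 : 4 * q / (1 + q) ^ 2 ≤ 1 := by
      rw [div_le_one h1q2]; nlinarith [sq_nonneg (1 - q)]
    have hca : 0 ≤ c ^ 2 - 4 * q / (1 + q) ^ 2 := by nlinarith [hc1, ha1]
    have hcc : (1:ℝ) ≤ c ^ 2 := by nlinarith [hc1]
    -- sqrt upper bound
    have hsub : s ≤ 2 - c := by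
      rw [hsdef, Real.sqrt_le_iff]
      refine ⟨by linarith, ?_⟩
      have h6 : 4 * c - 4 ≤ 4 * q / (1 + q) ^ 2 := by
        rw [le_div_iff₀ h1q2]
        nlinarith [hcup2]
      nlinarith [h6]
    -- upper bound on q*t
    have hub : q * t ≤ (1 + q) ^ 2 := by
      rw [hqt]; nlinarith [hsub, h1q2]
    refine ⟨hub, ?_, ?_⟩
    · -- q ≤ 1 case: s ≥ (1-q)/(1+q)
      intro hq1
      have hslb : (1 - q) / (1 + q) ≤ s := by
        rw [hsdef]
        refine (Real.le_sqrt (div_nonneg (by linarith) h1q.le) hca).mpr ?_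
        rw [div_pow]
        rw [show c ^ 2 - 4 * q / (1 + q) ^ 2 = (c ^ 2 * (1 + q) ^ 2 - 4 * q) / (1 + q) ^ 2 by
          field_simp]
        rw [div_le_div_iff₀ h1q2 h1q2]
        nlinarith [mul_le_mul_of_nonneg_right (mul_le_mul_of_nonneg_right hcc h1q2.le) h1q2.le]
      have hcs : 2 / (1 + q) ≤ c + s := by
        have h5 : (2:ℝ) / (1 + q) = 1 + (1 - q) / (1 + q) := by field_simp; ring
        linarith
      rw [hqt]
      calc 1 + q = (1 + q) ^ 2 / 2 * (2 / (1 + q)) := by field_simp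
        _ ≤ (1 + q) ^ 2 / 2 * (c + s) := by
            exact mul_le_mul_of_nonneg_left hcs (by positivity)
    · -- 1 ≤ q case: s ≥ (q-1)/(1+q)
      intro hq1
      have hslb : (q - 1) / (1 + q) ≤ s := by
        rw [hsdef]
        refine (Real.le_sqrt (div_nonneg (by linarith) h1q.le) hca).mpr ?_
        rw [div_pow]
        rw [show c ^ 2 - 4 * q / (1 + q) ^ 2 = (c ^ 2 * (1 + q) ^ 2 - 4 * q) / (1 + q) ^ 2 by
          field_simp]
        rw [div_le_div_iff₀ h1q2 h1q2]
        nlinarith [mul_le_mul_of_nonneg_right (mul_le_mul_of_nonneg_right hcc h1q2.le) h1q2.le]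
      have hcs : 2 * q / (1 + q) ≤ c + s := by
        have h5 : (2:ℝ) * q / (1 + q) = 1 + (q - 1) / (1 + q) := by field_simp; ring
        linarith
      rw [hqt]
      calc q * (1 + q) = (1 + q) ^ 2 / 2 * (2 * q / (1 + q)) := by field_simp
        _ ≤ (1 + q) ^ 2 / 2 * (c + s) := by
            exact mul_le_mul_of_nonneg_left hcs (by positivity)
  -- translate to bounds on F
  have hqt0 : ∀ q : ℝ, 0 < q → 0 < q * T q := fun q hq => mul_pos hq (hT q hq).1
  have hlow : ∀ q : ℝ, 0 < q → 2 * π ≤ 2 * π * (1 + q) ^ 2 / (q * T q) := by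
    intro q hq
    rw [le_div_iff₀ (hqt0 q hq)]
    nlinarith [Real.pi_pos, (key q hq).1]
  have hupB : ∀ q : ℝ, 0 < q → q ≤ 1 →
      2 * π * (1 + q) ^ 2 / (q * T q) ≤ 2 * π * (1 + q) := by
    intro q hq hq1
    rw [div_le_iff₀ (hqt0 q hq)]
    nlinarith [Real.pi_pos, (key q hq).2.1 hq1, hq,
      mul_le_mul_of_nonneg_left ((key q hq).2.1 hq1)
        (by positivity : (0:ℝ) ≤ 2 * π * (1 + q))]
  have hupA : ∀ q : ℝ, 1 ≤ q →
      2 * π * (1 + q) ^ 2 / (q * T q) ≤ 2 * π * (1 + q) / q := by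
    intro q hq1
    have hq : 0 < q := lt_of_lt_of_le one_pos hq1
    rw [div_le_div_iff₀ (hqt0 q hq) hq]
    nlinarith [Real.pi_pos, (key q hq).2.2 hq1, hq,
      mul_le_mul_of_nonneg_left ((key q hq).2.2 hq1)
        (by positivity : (0:ℝ) ≤ 2 * π * (1 + q))]
  constructor
  · -- limit at atTop
    have htop : Tendsto (fun q : ℝ => 2 * π * (1 + q) / q) atTop (nhds (2 * π)) := by
      have h1 : Tendsto (fun q : ℝ => 2 * π + 2 * π / q) atTop (nhds (2 * π + 0)) :=
        tendsto_const_nhds.add (tendsto_const_nhds.div_atTop tendsto_id)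
      rw [add_zero] at h1
      refine h1.congr' ?_
      filter_upwards [eventually_ge_atTop (1:ℝ)] with q hq
      have hq0 : q ≠ 0 := by linarith
      field_simp
      ring
    refine tendsto_of_tendsto_of_tendsto_of_le_of_le' tendsto_const_nhds htop ?_ ?_
    · filter_upwards [eventually_ge_atTop (1:ℝ)] with q hq
      exact hlow q (lt_of_lt_of_le one_pos hq)
    · filter_upwards [eventually_ge_atTop (1:ℝ)] with q hq
      exact hupA q hq
  · -- limit at 0+
    have h0 : Tendsto (fun q : ℝ => 2 * π * (1 + q)) (nhdsWithin 0 (Set.Ioi 0))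
        (nhds (2 * π)) := by
      have h1 : Tendsto (fun q : ℝ => 2 * π * (1 + q)) (nhds 0) (nhds (2 * π * (1 + 0))) :=
        (Continuous.tendsto (continuous_const.mul (continuous_const.add continuous_id)) 0)
      rw [show (2 * π * (1 + 0) : ℝ) = 2 * π by ring] at h1
      exact h1.mono_left nhdsWithin_le_nhds
    refine tendsto_of_tendsto_of_tendsto_of_le_of_le' tendsto_const_nhds h0 ?_ ?_
    · filter_upwards [self_mem_nhdsWithin] with q hq
      exact hlow q hq
    · filter_upwards [Ioo_mem_nhdsGT_of_mem (show (0:ℝ) ∈ Set.Ico 0 1 by simp),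
        self_mem_nhdsWithin] with q hq hq'
      exact hupB q hq' (le_of_lt hq.2)
end

section
/- Let q ≥ 2 and suppose T > 0 satisfies T ≥ ((1+q)²/q)·coth(T) − 2 and T ≥ q + 1/q. Then (T/(1+q))·sinh(T) − (1/q)·cosh(T) ≥ ((q−1)/(q+1))·cosh(q + 1/q), and moreover ((q−1)/(q+1))·cosh(q + 1/q) > q. -/
theorem density_lower_bound (q T : ℝ) (hq : 2 ≤ q) (hT : 0 < T)
    (h1 : ((1 + q) ^ 2 / q) * (Real.cosh T / Real.sinh T) - 2 ≤ T)
    (h2 : q + 1 / q ≤ T) :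
    ((q - 1) / (q + 1)) * Real.cosh (q + 1 / q) ≤
      (T / (1 + q)) * Real.sinh T - (1 / q) * Real.cosh T ∧
    q < ((q - 1) / (q + 1)) * Real.cosh (q + 1 / q) := by
  have hq0 : (0:ℝ) < q := by linarith
  have hq1 : (0:ℝ) < q + 1 := by linarith
  have hS : 0 < Real.sinh T := Real.sinh_pos_iff.mpr hT
  have hSC : Real.sinh T ≤ Real.cosh T := by
    have := Real.cosh_sub_sinh T
    nlinarith [Real.exp_pos (-T)]
  have hx0 : 0 < q + 1/q := by positivity
  have hcc : Real.cosh (q + 1/q) ≤ Real.cosh T := by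
    rw [Real.cosh_le_cosh, abs_of_pos hx0, abs_of_pos hT]; exact h2
  have hc0 : 0 < Real.cosh (q + 1/q) := Real.cosh_pos _
  have key : (1 + q) ^ 2 * Real.cosh T ≤ q * (T + 2) * Real.sinh T := by
    have h1' : ((1 + q) ^ 2 * Real.cosh T) / (q * Real.sinh T) ≤ T + 2 := by
      rw [div_mul_div_comm] at h1; linarith
    rw [div_le_iff₀ (by positivity)] at h1'
    linarith [h1']
  constructor
  · rw [show (q - 1) / (q + 1) * Real.cosh (q + 1/q)
        = (q * (q - 1) * Real.cosh (q + 1/q)) / (q * (q + 1)) by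
        field_simp,
      show (T / (1 + q)) * Real.sinh T - (1 / q) * Real.cosh T
        = (q * T * Real.sinh T - (1 + q) * Real.cosh T) / (q * (q + 1)) by
        field_simp; ring]
    gcongr
    have hqc : q * (q - 1) * Real.cosh (q + 1/q) ≤ q * (q - 1) * Real.cosh T := by
      apply mul_le_mul_of_nonneg_left hcc; nlinarith
    have h2q : 2 * q * Real.sinh T ≤ 2 * q * Real.cosh T :=
      mul_le_mul_of_nonneg_left hSC (by positivity)
    nlinarith [key, hqc, h2q]
  · -- numeric part
    set x : ℝ := q + 1/q with hxdef
    have hxq : x - 5/2 = (2*q - 1) * (q - 2) / (2*q) := by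
      rw [hxdef]; field_simp; ring
    have hu : 0 ≤ x - 5/2 := by
      rw [hxq]; apply div_nonneg; nlinarith; positivity
    have hexp52 : (12:ℝ) ≤ Real.exp (5/2) := by
      have e1 : (2.7182818283 : ℝ) < Real.exp 1 := Real.exp_one_gt_d9
      have ehalf : (1.625 : ℝ) ≤ Real.exp (1/2) := by
        have := Real.sum_le_exp_of_nonneg (by norm_num : (0:ℝ) ≤ 1/2) 3
        simp [Finset.sum_range_succ] at this
        norm_num at this ⊢; linarith
      have h52 : Real.exp (5/2) = Real.exp 1 * Real.exp 1 * Real.exp (1/2) := by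
        rw [← Real.exp_add, ← Real.exp_add]; norm_num
      rw [h52]
      nlinarith [Real.exp_pos (1:ℝ)]
    have htaylor : 1 + (x - 5/2) + (x - 5/2)^2/2 ≤ Real.exp (x - 5/2) := by
      have := Real.sum_le_exp_of_nonneg hu 3
      simp [Finset.sum_range_succ] at this
      norm_num at this ⊢; linarith
    have hexpx : 12 * (1 + (x - 5/2) + (x - 5/2)^2/2) ≤ Real.exp x := by
      have hsplit : Real.exp x = Real.exp (5/2) * Real.exp (x - 5/2) := by
        rw [← Real.exp_add]; ring_nf
      rw [hsplit]
      have h0 : (0:ℝ) ≤ 1 + (x - 5/2) + (x - 5/2)^2/2 := by positivity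
      nlinarith [Real.exp_pos (x - 5/2)]
    have hcosh : Real.exp x / 2 < Real.cosh x := by
      rw [Real.cosh_eq]; have := Real.exp_pos (-x); linarith
    have hcb : 6 * (1 + (x - 5/2) + (x - 5/2)^2/2) < Real.cosh x := by linarith
    have hkey : q * (q + 1) ≤ (q - 1) * (6 * (1 + (x - 5/2) + (x - 5/2)^2/2)) := by
      rw [hxq,
        show (q - 1) * (6 * (1 + (2*q - 1) * (q - 2) / (2*q)
            + ((2*q - 1) * (q - 2) / (2*q))^2/2))
          = ((q - 1) * 6 * (8*q^2 + 4*q*((2*q - 1)*(q - 2))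
              + ((2*q - 1)*(q - 2))^2)) / (8 * q^2) by field_simp; ring,
        le_div_iff₀ (by positivity)]
      have h2' : (0:ℝ) ≤ q - 2 := by linarith
      have hfac : (q - 1) * 6 * (8*q^2 + 4*q*((2*q - 1)*(q - 2))
            + ((2*q - 1)*(q - 2))^2) - q * (q + 1) * (8 * q^2)
          = (q - 2) * (24*(q-2)^4 + 136*(q-2)^3 + 318*(q-2)^2 + 366*(q-2) + 176) := by
        ring
      have hpos : 0 ≤ (q - 2) * (24*(q-2)^4 + 136*(q-2)^3 + 318*(q-2)^2
          + 366*(q-2) + 176) := by positivity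
      linarith [hfac, hpos]
    rw [div_mul_eq_mul_div, lt_div_iff₀ hq1]
    have := mul_lt_mul_of_pos_left hcb (show (0:ℝ) < q - 1 by linarith)
    linarith [hkey, this]
end

section
/- Let ρ₁, ρ₂, T > 0 and let σ be either root of the quadratic σ² ρ₁ρ₂ − σ(ρ₁+ρ₂)coth(T) + 1 = 0, i.e. σ = (1/2)((1/ρ₁ + 1/ρ₂)coth(T) ± sqrt((1/ρ₁+1/ρ₂)² coth(T)² − 4/(ρ₁ρ₂))). Then u(t,θ) = (cosh(t) − σρ₁ sinh(t))cos(θ) satisfies Δu = 0 on [0,T] × S¹ (flat metric), ∂_t u(0,θ) = −σρ₁ u(0,θ), and ∂_t u(T,θ) = σρ₂ u(T,θ). -/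
private lemma deriv_aux (c b : ℝ) :
    deriv (fun s => (Real.cosh s - c * Real.sinh s) * b)
      = fun s => (Real.sinh s - c * Real.cosh s) * b := by
  funext t
  exact (((Real.hasDerivAt_cosh t).sub ((Real.hasDerivAt_sinh t).const_mul c)).mul_const b).deriv

private lemma deriv_aux2 (c b : ℝ) :
    deriv (fun s => (Real.sinh s - c * Real.cosh s) * b)
      = fun s => (Real.cosh s - c * Real.sinh s) * b := by
  funext t
  exact (((Real.hasDerivAt_sinh t).sub ((Real.hasDerivAt_cosh t).const_mul c)).mul_const b).deriv

/-- The function `u(t,θ) = (cosh t − σ ρ₁ sinh t) cos θ`, where `σ` is a root of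
`σ² ρ₁ρ₂ − σ(ρ₁+ρ₂) coth T + 1 = 0`, is harmonic on the flat annulus and satisfies the
weighted Steklov boundary conditions at `t = 0` and `t = T`. -/
theorem steklov_first_mode_eigenfunction (T ρ₁ ρ₂ σ : ℝ) (hT : 0 < T) (h₁ : 0 < ρ₁)
    (h₂ : 0 < ρ₂)
    (hσ : σ ^ 2 * ρ₁ * ρ₂ - σ * (ρ₁ + ρ₂) * (Real.cosh T / Real.sinh T) + 1 = 0)
    (u : ℝ → ℝ → ℝ)
    (hu : ∀ t θ : ℝ, u t θ = (Real.cosh t - σ * ρ₁ * Real.sinh t) * Real.cos θ) :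
    (∀ t θ : ℝ, deriv (deriv (fun s => u s θ)) t + deriv (deriv (fun φ => u t φ)) θ = 0) ∧
    (∀ θ : ℝ, deriv (fun s => u s θ) 0 = -(σ * ρ₁) * u 0 θ) ∧
    (∀ θ : ℝ, deriv (fun s => u s θ) T = σ * ρ₂ * u T θ) := by
  have hufun : ∀ θ, (fun s => u s θ) = fun s => (Real.cosh s - σ * ρ₁ * Real.sinh s) * Real.cos θ := by
    intro θ; funext s; exact hu s θ
  have hθfun : ∀ t, (fun φ => u t φ) = fun φ => (Real.cosh t - σ * ρ₁ * Real.sinh t) * Real.cos φ := by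
    intro t; funext φ; exact hu t φ
  refine ⟨?_, ?_, ?_⟩
  · intro t θ
    rw [hufun θ, hθfun t, deriv_aux, deriv_aux2]
    have h1 : deriv (fun φ => (Real.cosh t - σ * ρ₁ * Real.sinh t) * Real.cos φ)
        = fun φ => (Real.cosh t - σ * ρ₁ * Real.sinh t) * (-Real.sin φ) := by
      funext φ
      exact ((Real.hasDerivAt_cos φ).const_mul _).deriv
    rw [h1]
    have h2 : deriv (fun φ => (Real.cosh t - σ * ρ₁ * Real.sinh t) * (-Real.sin φ)) θ
        = (Real.cosh t - σ * ρ₁ * Real.sinh t) * (-Real.cos θ) := by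
      have := ((Real.hasDerivAt_sin θ).neg.const_mul (Real.cosh t - σ * ρ₁ * Real.sinh t)).deriv
      simp only [neg_mul, mul_neg, Pi.neg_apply] at this ⊢; exact this
    rw [h2]; ring
  · intro θ
    rw [hufun θ, deriv_aux, hu]
    simp
  · intro θ
    rw [hufun θ, deriv_aux, hu]
    have hs : Real.sinh T ≠ 0 := ne_of_gt (by positivity)
    have key : Real.sinh T - σ * ρ₁ * Real.cosh T
        = σ * ρ₂ * (Real.cosh T - σ * ρ₁ * Real.sinh T) := by
      have h := hσ
      field_simp at h
      nlinarith [h]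
    show (Real.sinh T - σ * ρ₁ * Real.cosh T) * Real.cos θ = _
    rw [key]; ring
end

section
/- For each fixed T > 0 and ρ₁, ρ₂ > 0, the sequence σ⁽ⁿ⁾₋ = (n/2)((1/ρ₁ + 1/ρ₂)coth(nT) − sqrt((1/ρ₁+1/ρ₂)² coth(nT)² − 4/(ρ₁ρ₂))), n ≥ 1, is strictly increasing in n. -/
set_option maxHeartbeats 1000000 in
/-- The sequence `σ⁽ⁿ⁾₋` of lower Steklov eigenvalues of the Fourier modes on the annulus
is strictly increasing in `n ≥ 1`. -/
theorem sigma_n_minus_strictMono (T ρ₁ ρ₂ : ℝ) (hT : 0 < T) (h₁ : 0 < ρ₁) (h₂ : 0 < ρ₂)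
    (σ : ℕ → ℝ)
    (hσ : ∀ n : ℕ, σ n = ((n : ℝ) / 2) *
      ((1 / ρ₁ + 1 / ρ₂) * (Real.cosh (n * T) / Real.sinh (n * T)) -
        Real.sqrt ((1 / ρ₁ + 1 / ρ₂) ^ 2 * (Real.cosh (n * T) / Real.sinh (n * T)) ^ 2 -
          4 / (ρ₁ * ρ₂)))) :
    ∀ n m : ℕ, 1 ≤ n → n < m → σ n < σ m := by
  intro n m hn hnm
  set a : ℝ := 1 / ρ₁ + 1 / ρ₂ with ha
  set b : ℝ := 4 / (ρ₁ * ρ₂) with hb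
  have hapos : 0 < a := by positivity
  have hbpos : 0 < b := by positivity
  have hab : b ≤ a ^ 2 := by
    have h1' : ρ₁ ≠ 0 := h₁.ne'
    have h2' : ρ₂ ≠ 0 := h₂.ne'
    have hb' : b = 4 * (1 / ρ₁) * (1 / ρ₂) := by rw [hb]; field_simp
    rw [ha, hb']
    nlinarith [sq_nonneg (1 / ρ₁ - 1 / ρ₂)]
  -- coth values
  set c : ℕ → ℝ := fun k => Real.cosh (k * T) / Real.sinh (k * T) with hc
  clear_value a b c
  have hsinh : ∀ k : ℕ, 1 ≤ k → 0 < Real.sinh (k * T) := by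
    intro k hk
    apply Real.sinh_pos_iff.2
    have : (1 : ℝ) ≤ (k : ℝ) := by exact_mod_cast hk
    nlinarith
  have hc1 : ∀ k : ℕ, 1 ≤ k → 1 < c k := by
    intro k hk
    have hs := hsinh k hk
    have hlt : Real.sinh (k * T) < Real.cosh (k * T) := by
      nlinarith [Real.cosh_sub_sinh (k * T), Real.exp_pos (-(k * T))]
    rw [hc]
    exact (one_lt_div hs).2 hlt
  -- strict decrease of coth
  have hcdec : c m < c n := by
    have hm : 1 ≤ m := le_of_lt (lt_of_le_of_lt hn hnm)
    have hsn := hsinh n hn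
    have hsm := hsinh m hm
    have hxy : (n : ℝ) * T < (m : ℝ) * T := by
      have : (n : ℝ) < (m : ℝ) := by exact_mod_cast hnm
      nlinarith
    have hdiff : 0 < Real.sinh ((m : ℝ) * T - (n : ℝ) * T) :=
      Real.sinh_pos_iff.2 (by linarith)
    rw [Real.sinh_sub] at hdiff
    rw [hc]
    rw [div_lt_div_iff₀ hsm hsn]
    nlinarith
  have hm : 1 ≤ m := le_of_lt (lt_of_le_of_lt hn hnm)
  have hcn := hc1 n hn
  have hcm := hc1 m hm
  -- nonnegativity under the sqrt
  have hnonneg : ∀ k : ℕ, 1 ≤ k → 0 ≤ a ^ 2 * c k ^ 2 - b := by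
    intro k hk
    have hck := hc1 k hk
    have h1 : (0:ℝ) ≤ a ^ 2 * (c k ^ 2 - 1) :=
      mul_nonneg (sq_nonneg a) (by nlinarith)
    nlinarith
  -- rewrite σ k using conjugate
  have hkey : ∀ k : ℕ, 1 ≤ k →
      σ k = ((k : ℝ) / 2) * (b / (a * c k + Real.sqrt (a ^ 2 * c k ^ 2 - b))) := by
    intro k hk
    have hck := hc1 k hk
    have hnn := hnonneg k hk
    have hsq : Real.sqrt (a ^ 2 * c k ^ 2 - b) ^ 2 = a ^ 2 * c k ^ 2 - b :=
      Real.sq_sqrt hnn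
    have hsnn : 0 ≤ Real.sqrt (a ^ 2 * c k ^ 2 - b) := Real.sqrt_nonneg _
    have hden : 0 < a * c k + Real.sqrt (a ^ 2 * c k ^ 2 - b) := by nlinarith
    rw [hσ k]
    have : a * c k - Real.sqrt (a ^ 2 * c k ^ 2 - b)
        = b / (a * c k + Real.sqrt (a ^ 2 * c k ^ 2 - b)) := by
      rw [eq_div_iff (ne_of_gt hden)]
      nlinarith
    rw [← this, hc]
  -- compare denominators
  have hsqlt : Real.sqrt (a ^ 2 * c m ^ 2 - b) ≤ Real.sqrt (a ^ 2 * c n ^ 2 - b) := by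
    apply Real.sqrt_le_sqrt
    have h1 : c m ^ 2 ≤ c n ^ 2 := by nlinarith
    nlinarith [mul_le_mul_of_nonneg_left h1 (sq_nonneg a)]
  have hDm : 0 < a * c m + Real.sqrt (a ^ 2 * c m ^ 2 - b) := by
    have h1 : 0 < a * c m := mul_pos hapos (by linarith)
    have h2 := Real.sqrt_nonneg (a ^ 2 * c m ^ 2 - b)
    linarith
  have hDn : 0 < a * c n + Real.sqrt (a ^ 2 * c n ^ 2 - b) := by
    have h1 : 0 < a * c n := mul_pos hapos (by linarith)
    have h2 := Real.sqrt_nonneg (a ^ 2 * c n ^ 2 - b)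
    linarith
  have hDlt : a * c m + Real.sqrt (a ^ 2 * c m ^ 2 - b)
      ≤ a * c n + Real.sqrt (a ^ 2 * c n ^ 2 - b) := by
    have h1 : a * c m ≤ a * c n := mul_le_mul_of_nonneg_left hcdec.le hapos.le
    linarith
  rw [hkey n hn, hkey m hm]
  have hfrac : b / (a * c n + Real.sqrt (a ^ 2 * c n ^ 2 - b))
      ≤ b / (a * c m + Real.sqrt (a ^ 2 * c m ^ 2 - b)) :=
    div_le_div_of_nonneg_left (le_of_lt hbpos) hDm hDlt
  have hncast : (n : ℝ) / 2 < (m : ℝ) / 2 := by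
    have : (n : ℝ) < (m : ℝ) := by exact_mod_cast hnm
    linarith
  have hpos : 0 < b / (a * c n + Real.sqrt (a ^ 2 * c n ^ 2 - b)) := div_pos hbpos hDn
  have hn2 : 0 < (n : ℝ) / 2 := by
    have : (1 : ℝ) ≤ (n : ℝ) := by exact_mod_cast hn
    linarith
  calc ((n : ℝ) / 2) * (b / (a * c n + Real.sqrt (a ^ 2 * c n ^ 2 - b)))
      < ((m : ℝ) / 2) * (b / (a * c n + Real.sqrt (a ^ 2 * c n ^ 2 - b))) := by
        exact mul_lt_mul_of_pos_right hncast hpos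
    _ ≤ ((m : ℝ) / 2) * (b / (a * c m + Real.sqrt (a ^ 2 * c m ^ 2 - b))) := by
        apply mul_le_mul_of_nonneg_left hfrac (by linarith)
end
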